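/- arXiv:1504.03007 — 3 statements merged into one kernel-verified Lean document; each statement's English description precedes it below -/
import Mathlib

section
/- If f is a rational function on ℂ that has no poles outside the unit circle S¹, agrees with a function bounded on a dense subset of S¹ (hence is bounded on S¹ minus its poles), and has a finite limit as z → ∞, then f is constant. -/
/-!
Write `p / q = p₁ / q₁` in lowest terms. Off the finitely many roots of `q`, the bound on the
unit circle reads `‖p₁‖ ≤ C ‖q₁‖`, a closed condition, so by density it holds on the whole
circle. A root of `q₁` lies on the circle and would then be a common root of `p₁` and `q₁`;
hence `q₁` is a nonzero constant, and `p₁`, a polynomial with a finite limit at infinity, is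
constant as well.
-/

open Polynomial Filter Topology Metric

theorem Metric.sphere_subset_closure_sphere_sdiff_finite {E : Type*} [NormedAddCommGroup E]
    [NormedSpace ℝ E] (hE : 1 < Module.rank ℝ E) (x : E) {r : ℝ} (hr : 0 < r) {F : Set E}
    (hF : F.Finite) : sphere x r ⊆ closure (sphere x r \ F) := by
  have : ConnectedSpace (sphere x r) :=
    isConnected_iff_connectedSpace.mp (isConnected_sphere hE x hr.le)
  have : Nontrivial E := rank_pos_iff_nontrivial.mp (zero_lt_one.trans hE)
  obtain ⟨y, hy⟩ := (NormedSpace.sphere_nonempty (x := x)).mpr hr.le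
  have hy' : x - (y - x) ∈ sphere x r := by
    rw [mem_sphere_iff_norm] at hy ⊢
    rwa [sub_sub_cancel_left, norm_neg]
  have : Nontrivial (sphere x r) := by
    refine ⟨⟨y, hy⟩, ⟨x - (y - x), hy'⟩, fun h ↦ ?_⟩
    have h2 : (2 : ℝ) • (y - x) = 0 := by
      linear_combination (norm := module) congrArg Subtype.val h
    rw [smul_eq_zero, sub_eq_zero] at h2
    obtain h2 | rfl := h2
    · norm_num at h2
    · simp [hr.ne] at hy
  have hdense : Dense (Set.univ \ Subtype.val ⁻¹' F : Set (sphere x r)) :=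
    dense_univ.sdiff_finite (hF.preimage Subtype.val_injective.injOn)
  intro z hz
  have := closure_subtype.mp (hdense ⟨z, hz⟩)
  rwa [← Set.compl_eq_univ_sdiff, Set.image_compl_preimage, Subtype.range_coe] at this

namespace Polynomial

theorem exists_isCoprime_eval_div_eq {K : Type*} [Field K] (p : K[X]) {q : K[X]} (hq : q ≠ 0) :
    ∃ p₁ q₁ : K[X], IsCoprime p₁ q₁ ∧ q₁ ∣ q ∧
      ∀ x, q.eval x ≠ 0 → p.eval x / q.eval x = p₁.eval x / q₁.eval x := by
  classical
  set d := gcd p q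
  have hd : d ≠ 0 := gcd_ne_zero_of_right hq
  have hp : d * (p / d) = p := EuclideanDomain.mul_div_cancel' hd (gcd_dvd_left p q)
  have hq' : d * (q / d) = q := EuclideanDomain.mul_div_cancel' hd (gcd_dvd_right p q)
  refine ⟨p / d, q / d, isCoprime_div_gcd_div_gcd hq, Dvd.intro_left _ hq', fun x hx ↦ ?_⟩
  have hdx : d.eval x ≠ 0 := fun h ↦
    hx (eval_eq_zero_of_dvd_of_eval_eq_zero (gcd_dvd_right p q) h)
  calc p.eval x / q.eval x = d.eval x * (p / d).eval x / (d.eval x * (q / d).eval x) := by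
        rw [← eval_mul, ← eval_mul, hp, hq']
    _ = (p / d).eval x / (q / d).eval x := mul_div_mul_left _ _ hdx

theorem IsCoprime.eval_ne_zero_of_norm_le_mul {p q : ℂ[X]} (hpq : IsCoprime p q) (c : ℂ)
    {r : ℝ} (hr : 0 < r) {F : Set ℂ} (hF : F.Finite) {M : ℝ}
    (hbd : ∀ z ∈ sphere c r \ F, ‖p.eval z‖ ≤ M * ‖q.eval z‖) {x : ℂ} (hx : x ∈ sphere c r) :
    q.eval x ≠ 0 := by
  intro hqx
  have hle : ‖p.eval x‖ ≤ M * ‖q.eval x‖ :=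
    closure_minimal hbd (isClosed_le p.continuous.norm (continuous_const.mul q.continuous.norm))
      (sphere_subset_closure_sphere_sdiff_finite (by simp) c hr hF hx)
  rw [hqx, norm_zero, mul_zero, norm_le_zero_iff] at hle
  simpa [hle, hqx] using aeval_ne_zero_of_isCoprime hpq x

theorem eq_C_of_forall_eval_ne_zero {k : Type*} [Field k] [IsAlgClosed k] {p : k[X]}
    (h : ∀ x, p.eval x ≠ 0) : p = C (p.coeff 0) :=
  IsAlgClosed.roots_eq_zero_iff.mp
    (Multiset.eq_zero_of_forall_notMem fun x hx ↦ h x (isRoot_of_mem_roots hx))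

theorem eq_C_of_tendsto_cobounded {𝕜 : Type*} [NontriviallyNormedField 𝕜] {p : 𝕜[X]} {L : 𝕜}
    (h : Tendsto p.eval (Bornology.cobounded 𝕜) (𝓝 L)) : p = C (p.coeff 0) :=
  eq_C_of_degree_le_zero <| not_lt.mp fun hd ↦ not_tendsto_nhds_of_tendsto_atTop
    (p.tendsto_norm_atTop hd tendsto_norm_cobounded_atTop) _ h.norm

end Polynomial

theorem rational_function_constant_general (p q : Polynomial ℂ)
    (hpoles : ∀ z : ℂ, q.eval z = 0 → ‖z‖ = 1)
    (C : ℝ)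
    (hbd : ∀ z : ℂ, ‖z‖ = 1 → q.eval z ≠ 0 →
      ‖p.eval z / q.eval z‖ ≤ C)
    (L : ℂ)
    (hlim : Filter.Tendsto (fun z : ℂ => p.eval z / q.eval z)
      (Bornology.cobounded ℂ) (nhds L)) :
    ∀ z w : ℂ, q.eval z ≠ 0 → q.eval w ≠ 0 →
      p.eval z / q.eval z = p.eval w / q.eval w := by
  intro z w hz hw
  have hq : q ≠ 0 := by rintro rfl; exact hz eval_zero
  obtain ⟨p₁, q₁, hcop, hdvd, hfrac⟩ := exists_isCoprime_eval_div_eq p hq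
  have hq₁ : ∀ x, q₁.eval x ≠ 0 := by
    intro x hx
    refine hcop.eval_ne_zero_of_norm_le_mul 0 one_pos (finite_setOfPred_isRoot hq)
      (M := C) (fun y ⟨hy, hqy⟩ ↦ ?_)
      (mem_sphere_zero_iff_norm.2 (hpoles x (eval_eq_zero_of_dvd_of_eval_eq_zero hdvd hx))) hx
    have hq₁y : q₁.eval y ≠ 0 := fun h ↦ hqy (eval_eq_zero_of_dvd_of_eval_eq_zero hdvd h)
    rw [← div_le_iff₀ (norm_pos_iff.2 hq₁y), ← norm_div, ← hfrac y hqy]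
    exact hbd y (mem_sphere_zero_iff_norm.1 hy) hqy
  obtain ⟨c, rfl⟩ : ∃ c, q₁ = Polynomial.C c := ⟨_, eq_C_of_forall_eval_ne_zero hq₁⟩
  have hc : c ≠ 0 := by simpa using hq₁ 0
  have hp₁ : Tendsto p₁.eval (Bornology.cobounded ℂ) (𝓝 (L * c)) := by
    refine (hlim.mul_const c).congr' ?_
    filter_upwards [Bornology.le_cofinite ℂ (finite_setOfPred_isRoot hq).compl_mem_cofinite]
      with y hy
    rw [hfrac y hy, eval_C, div_mul_cancel₀ _ hc]
  rw [hfrac z hz, hfrac w hw, eq_C_of_tendsto_cobounded hp₁]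
  simp

/-- A rational function on `ℂ` whose poles all lie on the unit
circle, which is bounded on the part of the unit circle where it is defined,
and which has a finite limit at infinity, is constant (on its domain of
definition). -/
theorem rational_function_constant (p q : Polynomial ℂ) (hq : q ≠ 0)
    (hpoles : ∀ z : ℂ, q.eval z = 0 → ‖z‖ = 1)
    (C : ℝ)
    (hbd : ∀ z : ℂ, ‖z‖ = 1 → q.eval z ≠ 0 →
      ‖p.eval z / q.eval z‖ ≤ C)
    (L : ℂ)
    (hlim : Filter.Tendsto (fun z : ℂ => p.eval z / q.eval z)
      (Bornology.cobounded ℂ) (nhds L)) :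
    ∀ z w : ℂ, q.eval z ≠ 0 → q.eval w ≠ 0 →
      p.eval z / q.eval z = p.eval w / q.eval w :=
  rational_function_constant_general p q hpoles C hbd L hlim
end

section
/- The group Γ₀(2) = {(a b; c d) ∈ SL₂(ℤ) : c ≡ 0 mod 2} is generated by the matrices T = (1 1; 0 1) and S T² S T, where S = (0 −1; 1 0). -/
/-!
Descent on the first column `(a, c)` of `A ∈ Γ₀(2)`. Left multiplication by `T ^ n` replaces `a`
by `a + n c`, and by `lowerT ^ n`, where `lowerT = (1 0; 2 1) = T · (S T² S T)`, replaces `c` by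
`c + 2 n a`. As `c` is even, `a` is odd, so unless `c = 0` one of these moves strictly decreases
`|a| + |c|`. When `c = 0` the matrix is `± T ^ b`, and `-1 = (S T² S T)²`.
-/

open ModularGroup Matrix MatrixGroups CongruenceSubgroup

lemma CongruenceSubgroup.mem_Gamma0_iff_dvd {N : ℕ} {A : SL(2, ℤ)} :
    A ∈ Gamma0 N ↔ (N : ℤ) ∣ A 1 0 := by
  rw [Gamma0_mem, ZMod.intCast_zmod_eq_zero_iff_dvd]

lemma Int.exists_natAbs_add_mul_lt {x y : ℤ} (hy : y ≠ 0) (hyx : y.natAbs < 2 * x.natAbs) :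
    ∃ n : ℤ, (x + n * y).natAbs < x.natAbs := by
  have hx : x ≠ 0 := by omega
  rcases hx.lt_or_gt with hx | hx <;> rcases hy.lt_or_gt with hy | hy <;>
    first | exact ⟨1, by omega⟩ | exact ⟨-1, by omega⟩

namespace ModularGroup

def lowerT : SL(2, ℤ) := S * T ^ (-2 : ℤ) * S⁻¹

lemma coe_lowerT_zpow (n : ℤ) : (lowerT ^ n).1 = !![1, 0; 2 * n, 1] := by
  rw [lowerT, conj_zpow, ← _root_.zpow_mul, S_inv]
  simp [coe_T_zpow]

variable (n : ℤ) (A : SL(2, ℤ))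

@[simp]
lemma T_zpow_mul_apply_zero_zero : (T ^ n * A) 0 0 = A 0 0 + n * A 1 0 := by
  simp [coe_T_zpow, Matrix.mul_apply, Fin.sum_univ_two]

@[simp]
lemma lowerT_zpow_mul_apply_zero_zero : (lowerT ^ n * A) 0 0 = A 0 0 := by
  simp [coe_lowerT_zpow, Matrix.mul_apply, Fin.sum_univ_two]

@[simp]
lemma lowerT_zpow_mul_apply_one_zero : (lowerT ^ n * A) 1 0 = A 1 0 + n * (2 * A 0 0) := by
  simp [coe_lowerT_zpow, Matrix.mul_apply, Fin.sum_univ_two, add_comm, mul_assoc, mul_left_comm]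

variable {A}

lemma eq_T_zpow_or_eq_neg_T_zpow_of_apply_one_zero_eq_zero (hc : A 1 0 = 0) :
    A = T ^ A 0 1 ∨ A = -T ^ (-A 0 1) := by
  have had := A.det_coe
  replace had : A 0 0 * A 1 1 = 1 := by rw [det_fin_two, hc] at had; lia
  rcases Int.eq_one_or_neg_one_of_mul_eq_one' had with ⟨ha, hd⟩ | ⟨ha, hd⟩
  · left
    ext i j; fin_cases i <;> fin_cases j <;> simp [ha, hc, hd, coe_T_zpow]
  · right
    ext i j; fin_cases i <;> fin_cases j <;> simp [ha, hc, hd, coe_T_zpow]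

lemma apply_zero_zero_ne_zero_of_two_dvd (hc : 2 ∣ A 1 0) : A 0 0 ≠ 0 := by
  intro ha
  have hdet := A.det_coe
  rw [det_fin_two, ha, zero_mul, zero_sub, neg_eq_iff_eq_neg] at hdet
  have : (2 : ℤ) ∣ -1 := hdet ▸ dvd_mul_of_dvd_right hc _
  norm_num at this

lemma exists_zpow_mul_natAbs_lt (hc : 2 ∣ A 1 0) (hc0 : A 1 0 ≠ 0) :
    ∃ g ∈ ({T, lowerT} : Set SL(2, ℤ)), ∃ n : ℤ, 2 ∣ (g ^ n * A) 1 0 ∧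
      ((g ^ n * A) 0 0).natAbs + ((g ^ n * A) 1 0).natAbs < (A 0 0).natAbs + (A 1 0).natAbs := by
  have ha := apply_zero_zero_ne_zero_of_two_dvd hc
  by_cases hca : (A 1 0).natAbs ≤ (A 0 0).natAbs
  · obtain ⟨n, hn⟩ := Int.exists_natAbs_add_mul_lt hc0
      (by omega : (A 1 0).natAbs < 2 * (A 0 0).natAbs)
    refine ⟨T, by simp, n, by rwa [T_pow_mul_apply_one], ?_⟩
    rw [T_zpow_mul_apply_zero_zero, T_pow_mul_apply_one]
    omega
  · obtain ⟨n, hn⟩ := Int.exists_natAbs_add_mul_lt (by omega : 2 * A 0 0 ≠ 0)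
      (by omega : (2 * A 0 0).natAbs < 2 * (A 1 0).natAbs)
    refine ⟨lowerT, by simp, n, ?_, ?_⟩ <;>
      rw [lowerT_zpow_mul_apply_one_zero]
    · exact hc.add (dvd_mul_of_dvd_right (dvd_mul_right 2 _) n)
    · rw [lowerT_zpow_mul_apply_zero_zero]
      omega

theorem Gamma0_two_le {H : Subgroup SL(2, ℤ)} (hT : T ∈ H) (hL : lowerT ∈ H) (hneg : -1 ∈ H) :
    Gamma0 2 ≤ H := by
  intro A hA
  replace hA : 2 ∣ A 1 0 := by exact_mod_cast mem_Gamma0_iff_dvd.mp hA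
  induction hm : (A 0 0).natAbs + (A 1 0).natAbs using Nat.strong_induction_on generalizing A with
  | _ m ih =>
  by_cases hc0 : A 1 0 = 0
  · rcases eq_T_zpow_or_eq_neg_T_zpow_of_apply_one_zero_eq_zero hc0 with hA | hA <;> rw [hA]
    · exact zpow_mem hT _
    · rw [← neg_one_mul]
      exact mul_mem hneg (zpow_mem hT _)
  · obtain ⟨g, hg, n, hdvd, hlt⟩ := exists_zpow_mul_natAbs_lt hA hc0
    have hgH : g ∈ H := by rcases hg with rfl | rfl <;> assumption
    exact (mul_mem_cancel_left (zpow_mem hgH n)).mp (ih _ (hm ▸ hlt) hdvd rfl)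

end ModularGroup

/-- The congruence subgroup
`Γ₀(2) = {(a b; c d) ∈ SL₂(ℤ) : c ≡ 0 mod 2}` is generated by the matrices
`T = (1 1; 0 1)` and `S T² S T`, where `S = (0 -1; 1 0)`. -/
theorem Gamma0_two_generators :
    CongruenceSubgroup.Gamma0 2
      = Subgroup.closure {T, S * T ^ 2 * S * T} := by
  have hT : T ∈ Subgroup.closure {T, S * T ^ 2 * S * T} := Subgroup.subset_closure (by simp)
  have hU : S * T ^ 2 * S * T ∈ Subgroup.closure {T, S * T ^ 2 * S * T} :=
    Subgroup.subset_closure (by simp)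
  refine le_antisymm (Gamma0_two_le hT ?_ ?_) ((Subgroup.closure_le _).mpr ?_)
  · have : T * (S * T ^ 2 * S * T) = lowerT := by decide
    exact this ▸ mul_mem hT hU
  · have : (S * T ^ 2 * S * T) ^ 2 = -1 := by decide
    exact this ▸ pow_mem hU 2
  · rintro _ (rfl | rfl)
    · simp
    · rw [SetLike.mem_coe, Gamma0_mem]
      decide
end

section
/- Let F : ℂ × ℍ → ℂ be a meromorphic Jacobi form of index m and weight l over (2ℤ)² ⋊ SL₂(ℤ) whose poles all lie on lines of the form t = k(cτ+d)/r with k, r, c, d integers, gcd(c,d) = 1. If for every 𝒢 ∈ SL₂(ℤ) the transformed function F(𝒢(t,τ)) is holomorphic in (t,τ) ∈ ℝ × ℍ, then F is holomorphic on all of ℂ × ℍ. -/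
/-!
Let `t = k(cτ+d)/r` be a candidate pole and complete `(c, d)` to `𝒢 = (a b; c d) ∈ SL₂(ℤ)`.
Near the pole, `F` is the `𝒢`-transform of its `𝒢⁻¹`-transform, and the map
`(t, τ) ↦ (t/(cτ+d), (aτ+b)/(cτ+d))` sends the pole to the point `(k/r, 𝒢τ)` of `ℝ × ℍ`,
where the `𝒢⁻¹`-transform is analytic by hypothesis. Transforming back preserves analyticity
because the automorphy factor `(cτ+d)^{-l} e^{-2πimct²/(cτ+d)}` is analytic wherever
`cτ+d ≠ 0`, which holds on `ℍ`.
-/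

open scoped Real
open Complex

/-- `F(𝒢(t,τ))` for `𝒢 = (a b; c d)`. -/
noncomputable def jacobiSlash (F : ℂ → ℂ → ℂ) (m : ℝ) (l : ℤ) (a b c d : ℂ) (q : ℂ × ℂ) : ℂ :=
  (c * q.2 + d) ^ (-l) * exp (-2 * π * I * m * c * q.1 ^ 2 / (c * q.2 + d)) *
    F (q.1 / (c * q.2 + d)) ((a * q.2 + b) / (c * q.2 + d))

lemma jacobiSlash_jacobiSlash_inv (F : ℂ → ℂ → ℂ) (m : ℝ) (l : ℤ) {a b c d : ℂ}
    (hdet : a * d - b * c = 1) {q : ℂ × ℂ} (hq : c * q.2 + d ≠ 0) :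
    jacobiSlash (fun z w => jacobiSlash F m l d (-b) (-c) a (z, w)) m l a b c d q = F q.1 q.2 := by
  obtain ⟨z, w⟩ := q
  dsimp only at hq
  have hinv : -c * ((a * w + b) / (c * w + d)) + a = (c * w + d)⁻¹ := by
    field_simp
    linear_combination hdet
  have hτ : (d * ((a * w + b) / (c * w + d)) + -b) / (c * w + d)⁻¹ = w := by
    rw [div_inv_eq_mul, add_mul, mul_assoc, div_mul_cancel₀ _ hq]
    linear_combination w * hdet
  have hexp : -2 * π * I * m * -c * (z / (c * w + d)) ^ 2 / (c * w + d)⁻¹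
      = -(-2 * π * I * m * c * z ^ 2 / (c * w + d)) := by
    field_simp
  simp only [jacobiSlash, hinv, hτ, hexp, div_inv_eq_mul, div_mul_cancel₀ _ hq, inv_zpow',
    neg_neg, exp_neg]
  rw [zpow_neg]
  field_simp

lemma AnalyticAt.jacobiSlash {F : ℂ → ℂ → ℂ} (m : ℝ) (l : ℤ) {a b c d : ℂ} {q : ℂ × ℂ}
    (hF : AnalyticAt ℂ (fun q : ℂ × ℂ => F q.1 q.2)
      (q.1 / (c * q.2 + d), (a * q.2 + b) / (c * q.2 + d)))
    (hq : c * q.2 + d ≠ 0) :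
    AnalyticAt ℂ (_root_.jacobiSlash F m l a b c d) q := by
  have hlin (e f : ℂ) : AnalyticAt ℂ (fun q : ℂ × ℂ => e * q.2 + f) q :=
    (analyticAt_const.mul analyticAt_snd).add analyticAt_const
  have hmap : AnalyticAt ℂ
      (fun q : ℂ × ℂ => (q.1 / (c * q.2 + d), (a * q.2 + b) / (c * q.2 + d))) q :=
    (analyticAt_fst.fun_div (hlin c d) hq).prod ((hlin a b).fun_div (hlin c d) hq)
  have hFφ := hF.comp_of_eq hmap rfl
  exact (((hlin c d).zpow hq).mul
    ((analyticAt_const.mul (analyticAt_fst.pow 2)).div (hlin c d) hq).cexp).mul hFφ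

lemma analyticAt_of_analyticAt_jacobiSlash_inv {F : ℂ → ℂ → ℂ} (m : ℝ) (l : ℤ)
    {a b c d : ℂ} (hdet : a * d - b * c = 1) {p : ℂ × ℂ} (hp : c * p.2 + d ≠ 0)
    (hG : AnalyticAt ℂ (jacobiSlash F m l d (-b) (-c) a)
      (p.1 / (c * p.2 + d), (a * p.2 + b) / (c * p.2 + d))) :
    AnalyticAt ℂ (fun q : ℂ × ℂ => F q.1 q.2) p := by
  refine (AnalyticAt.jacobiSlash (F := fun z w => jacobiSlash F m l d (-b) (-c) a (z, w))
    m l hG hp).congr ?_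
  have hopen : IsOpen {q : ℂ × ℂ | c * q.2 + d ≠ 0} :=
    isOpen_ne_fun (by fun_prop) continuous_const
  filter_upwards [hopen.mem_nhds hp] with q hq
  exact jacobiSlash_jacobiSlash_inv F m l hdet hq

lemma linear_ne_zero_of_det_eq_one {a b c d : ℤ} (hdet : a * d - b * c = 1) {τ : ℂ}
    (hτ : τ.im ≠ 0) : (c : ℂ) * τ + d ≠ 0 := by
  have hcd : ![(c : ℝ), d] ≠ 0 := by
    intro h
    have hc : c = 0 := by simpa using congrFun h 0
    have hd : d = 0 := by simpa using congrFun h 1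
    simp [hc, hd] at hdet
  simpa using UpperHalfPlane.linear_ne_zero_of_im hτ hcd

lemma im_moebius_pos_of_det_eq_one {a b c d : ℤ} (hdet : a * d - b * c = 1) {τ : ℂ}
    (hτ : 0 < τ.im) : 0 < (((a : ℂ) * τ + b) / ((c : ℂ) * τ + d)).im := by
  let g : Matrix.SpecialLinearGroup (Fin 2) ℤ :=
    ⟨!![a, b; c, d], by simpa [Matrix.det_fin_two] using hdet⟩
  have h := (g • (⟨τ, hτ⟩ : UpperHalfPlane)).im_pos
  rw [UpperHalfPlane.im, UpperHalfPlane.coe_specialLinearGroup_apply] at h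
  simpa [g] using h

/-- Let `F(t, τ)` be a meromorphic Jacobi form of index `m` and
weight `l`: `F` is analytic on `ℍ` in `τ` and entire in `t` away from a singular set
`S` all of whose points lie on lines `t = k(cτ+d)/r` with `k, r, c, d ∈ ℤ`, `r ≠ 0`,
`gcd(c, d) = 1`.  If for every `𝒢 = (a b; c d) ∈ SL₂(ℤ)` the transformed function
`F(𝒢(t,τ)) = (cτ+d)^{-l} e^{-2πi m c t²/(cτ+d)} F(t/(cτ+d), (aτ+b)/(cτ+d))`
is holomorphic at every point of `ℝ × ℍ`, then `F` is holomorphic on all of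
`ℂ × ℍ`. -/
theorem jacobiForm_holomorphic_of_real_holomorphic
    (F : ℂ → ℂ → ℂ) (m : ℝ) (l : ℤ) (S : Set (ℂ × ℂ))
    (hS : ∀ p ∈ S, 0 < p.2.im ∧
      ∃ k r c d : ℤ, r ≠ 0 ∧ IsCoprime c d ∧
        p.1 = (k : ℂ) * ((c : ℂ) * p.2 + (d : ℂ)) / (r : ℂ))
    (hF : ∀ p : ℂ × ℂ, 0 < p.2.im → p ∉ S →
      AnalyticAt ℂ (fun q : ℂ × ℂ => F q.1 q.2) p)
    (hG : ∀ a b c d : ℤ, a * d - b * c = 1 →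
      ∀ (t : ℝ) (τ : ℂ), 0 < τ.im →
        AnalyticAt ℂ
          (fun q : ℂ × ℂ =>
            ((c : ℂ) * q.2 + (d : ℂ)) ^ (-l) *
              Complex.exp (-2 * (π : ℂ) * Complex.I * (m : ℂ) * (c : ℂ) * q.1 ^ 2 /
                ((c : ℂ) * q.2 + (d : ℂ))) *
              F (q.1 / ((c : ℂ) * q.2 + (d : ℂ)))
                (((a : ℂ) * q.2 + (b : ℂ)) / ((c : ℂ) * q.2 + (d : ℂ))))
          ((t : ℂ), τ)) :
    ∀ p : ℂ × ℂ, 0 < p.2.im → AnalyticAt ℂ (fun q : ℂ × ℂ => F q.1 q.2) p := by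
  intro p hp
  by_cases hpS : p ∈ S
  case neg => exact hF p hp hpS
  obtain ⟨-, k, r, c, d, hr, ⟨u, v, huv⟩, hp₁⟩ := hS p hpS
  have hdet : v * d - (-u) * c = 1 := by linear_combination huv
  have hden := linear_ne_zero_of_det_eq_one hdet hp.ne'
  have hreal : p.1 / (c * p.2 + d) = ((k / r : ℝ) : ℂ) := by
    rw [hp₁]
    push_cast
    field_simp
  -- `𝒢 = (v -u; c d)`, so `𝒢⁻¹ = (d u; -c v)`
  have hinv := hG d u (-c) v (by linear_combination huv) (k / r) _
    (im_moebius_pos_of_det_eq_one hdet hp)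
  refine analyticAt_of_analyticAt_jacobiSlash_inv m l (a := v) (b := -u)
    (by exact_mod_cast hdet) hden ?_
  rw [hreal]
  unfold jacobiSlash
  simpa only [Int.cast_neg, neg_neg] using hinv
end
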